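/- For a quasi-metric space (X,d) the following are equivalent: (1) (X,d) is standard; (2) for each directed subset {(x_i,r_i)}_{i∈D} of BX (viewed as a monotone net), if {(x_i,r_i)}_{i∈D} has a least upper bound in BX, then so do (i) the directed set {(x_i, t + r_i)}_{i∈D} for each t < ∞, and (ii) the directed set {(x_i, r_i − t)}_{i∈D} for t = inf_{i∈D} r_i. -/

import Mathlib

open scoped ENNReal NNReal

universe u v w

/-- A quasi-metric space structure on `X`: distances valued in `[0,∞]`, with
`d x x = 0`, the triangle inequality, and separatedness. -/
structure QuasiMetric (X : Type u) where
  d : X → X → ℝ≥0∞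
  d_self : ∀ x, d x x = 0
  d_triangle : ∀ x y z, d x z ≤ d x y + d y z
  d_separated : ∀ x y, d x y = 0 → d y x = 0 → x = y

namespace QuasiMetric

variable {X : Type u}

/-- The order on formal balls: `(x, r) ⊑ (y, s)` iff `s + d x y ≤ r`
(equivalently `d x y ≤ r - s`). -/
def ballLE (q : QuasiMetric X) (p p' : X × ℝ≥0) : Prop :=
  (p'.2 : ℝ≥0∞) + q.d p.1 p'.1 ≤ (p.2 : ℝ≥0∞)

/-- `b` is a least upper bound of the set `S` of formal balls. -/
def IsBallLUB (q : QuasiMetric X) (S : Set (X × ℝ≥0)) (b : X × ℝ≥0) : Prop :=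
  (∀ p ∈ S, q.ballLE p b) ∧ ∀ c, (∀ p ∈ S, q.ballLE p c) → q.ballLE b c

/-- `le` is a directed preorder (reflexive, transitive, directed). -/
def DirectedPre {D : Type v} (le : D → D → Prop) : Prop :=
  (∀ i, le i i) ∧ (∀ i j k, le i j → le j k → le i k) ∧ ∀ i j, ∃ k, le i k ∧ le j k

/-- A net `x : D → X` is forward Cauchy: `inf_i sup_{k ≥ j ≥ i} d (x j) (x k) = 0`. -/
def ForwardCauchy (q : QuasiMetric X) {D : Type v} (le : D → D → Prop) (x : D → X) : Prop :=
  (⨅ i, ⨆ j, ⨆ (_ : le i j), ⨆ k, ⨆ (_ : le j k), q.d (x j) (x k)) = 0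

/-- `a` is a Yoneda limit of the net `x : D → X`:
for all `y`, `d a y = inf_i sup_{j ≥ i} d (x j) y`. -/
def IsYonedaLimit (q : QuasiMetric X) {D : Type v} (le : D → D → Prop) (x : D → X) (a : X) :
    Prop :=
  ∀ y, q.d a y = ⨅ i, ⨆ j, ⨆ (_ : le i j), q.d (x j) y

/-- `(X, d)` is Yoneda complete: every forward Cauchy net has a Yoneda limit. -/
def YonedaComplete (q : QuasiMetric X) : Prop :=
  ∀ (D : Type u) (le : D → D → Prop), DirectedPre le → Nonempty D →
    ∀ x : D → X, q.ForwardCauchy le x → ∃ a, q.IsYonedaLimit le x a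

/-- `(X, d)` is standard: whenever a directed set of formal balls (viewed as a monotone
net indexed by itself) has a least upper bound, the corresponding forward Cauchy net of
centers has a Yoneda limit. -/
def Standard (q : QuasiMetric X) : Prop :=
  ∀ S : Set (X × ℝ≥0), S.Nonempty → DirectedOn q.ballLE S →
    (∃ b, q.IsBallLUB S b) →
    ∃ a, q.IsYonedaLimit (fun p p' : ↥S => q.ballLE p.1 p'.1) (fun p : ↥S => p.1.1) a

/-- A weight of `(X, d)`: `φ x ≤ φ y + d x y`. -/
def IsWeight (q : QuasiMetric X) (φ : X → ℝ≥0∞) : Prop :=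
  ∀ x y, φ x ≤ φ y + q.d x y

/-- The quasi-metric on weights: `ρ(φ, ψ) = sup_y (ψ y ⊖ φ y)`. -/
noncomputable def rho {Y : Type v} (φ ψ : Y → ℝ≥0∞) : ℝ≥0∞ := ⨆ y, ψ y - φ y

/-- An ideal of `(X, d)`: a weight `φ` with `inf φ = 0` such that
`ρ(φ, min (λ, μ)) = min (ρ(φ,λ), ρ(φ,μ))` for all weights `λ`, `μ`. -/
def IsIdeal (q : QuasiMetric X) (φ : X → ℝ≥0∞) : Prop :=
  q.IsWeight φ ∧ (⨅ x, φ x) = 0 ∧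
    ∀ l m : X → ℝ≥0∞, q.IsWeight l → q.IsWeight m →
      rho φ (fun x => min (l x) (m x)) = min (rho φ l) (rho φ m)

/-- A weight `φ` is bounded: there are `r < ∞` and `a ∈ X` with `d x a ≤ r + φ x` for all `x`. -/
def BoundedWeight (q : QuasiMetric X) (φ : X → ℝ≥0∞) : Prop :=
  ∃ (r : ℝ≥0) (a : X), ∀ x, q.d x a ≤ (r : ℝ≥0∞) + φ x

/-- `b` is a colimit of the weight `φ`: for all `y`, `d b y = sup_x (d x y ⊖ φ x)`. -/
def IsColimit (q : QuasiMetric X) (φ : X → ℝ≥0∞) (b : X) : Prop :=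
  ∀ y, q.d b y = ⨆ x, q.d x y - φ x

/-- The poset of formal balls is a dcpo: every (nonempty) directed subset has a lub. -/
def BallDcpo (q : QuasiMetric X) : Prop :=
  ∀ S : Set (X × ℝ≥0), S.Nonempty → DirectedOn q.ballLE S → ∃ b, q.IsBallLUB S b

/-- The poset of formal balls is a local dcpo: every (nonempty) directed subset with an
upper bound has a lub. -/
def BallLocalDcpo (q : QuasiMetric X) : Prop :=
  ∀ S : Set (X × ℝ≥0), S.Nonempty → DirectedOn q.ballLE S →
    (∃ c, ∀ p ∈ S, q.ballLE p c) → ∃ b, q.IsBallLUB S b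

/-- `u` is way below `v` in the poset of formal balls. -/
def ballWayBelow (q : QuasiMetric X) (u v : X × ℝ≥0) : Prop :=
  ∀ S : Set (X × ℝ≥0), S.Nonempty → DirectedOn q.ballLE S →
    ∀ s, q.IsBallLUB S s → q.ballLE v s → ∃ p ∈ S, q.ballLE u p

/-- The poset of formal balls is a continuous poset: for every `p`, the set of elements
way below `p` is (nonempty) directed and has `p` as its least upper bound. -/
def BallContinuousPoset (q : QuasiMetric X) : Prop :=
  ∀ p : X × ℝ≥0,
    {u : X × ℝ≥0 | q.ballWayBelow u p}.Nonempty ∧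
    DirectedOn q.ballLE {u : X × ℝ≥0 | q.ballWayBelow u p} ∧
    q.IsBallLUB {u : X × ℝ≥0 | q.ballWayBelow u p} p

/-- A function `χ` is `𝓙`-closed: `ρ(ψ, χ) ≥ χ (colim ψ)` for every bounded ideal `ψ`
possessing a colimit. -/
def JClosed (q : QuasiMetric X) (χ : X → ℝ≥0∞) : Prop :=
  ∀ ψ : X → ℝ≥0∞, q.IsIdeal ψ → q.BoundedWeight ψ → ∀ c, q.IsColimit ψ c → χ c ≤ rho ψ χ

/-- `(X, d)` is a continuous `𝕁`-algebra: every bounded ideal has a colimit, and there is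
a map `⇓` assigning to each `x` a bounded ideal `⇓x` with `ρ(⇓x, φ) = d x (colim φ)` for
all `x` and all bounded ideals `φ`. -/
def ContinuousJAlgebra (q : QuasiMetric X) : Prop :=
  ∃ colim : (X → ℝ≥0∞) → X,
    (∀ φ, q.IsIdeal φ → q.BoundedWeight φ → q.IsColimit φ (colim φ)) ∧
    ∃ w : X → X → ℝ≥0∞,
      (∀ x, q.IsIdeal (w x) ∧ q.BoundedWeight (w x)) ∧
      ∀ (x : X) (φ : X → ℝ≥0∞), q.IsIdeal φ → q.BoundedWeight φ →
        rho (w x) φ = q.d x (colim φ)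

/-- The quasi-metric space of all functions `X → [0,∞]` satisfying a predicate `P`
(e.g. the bounded weights, or the bounded ideals), with the quasi-metric
`ρ(φ, ψ) = sup_x (ψ x ⊖ φ x)`. -/
noncomputable def weightSpace (q : QuasiMetric X) (P : (X → ℝ≥0∞) → Prop) :
    QuasiMetric {φ : X → ℝ≥0∞ // P φ} where
  d φ ψ := rho φ.1 ψ.1
  d_self φ := by simp [rho]
  d_triangle φ ψ χ := by
    refine iSup_le fun x => ?_
    calc χ.1 x - φ.1 x ≤ (χ.1 x - ψ.1 x) + (ψ.1 x - φ.1 x) := tsub_le_tsub_add_tsub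
    _ ≤ rho ψ.1 χ.1 + rho φ.1 ψ.1 :=
        add_le_add (le_iSup (fun y => χ.1 y - ψ.1 y) x) (le_iSup (fun y => ψ.1 y - φ.1 y) x)
    _ = rho φ.1 ψ.1 + rho ψ.1 χ.1 := add_comm _ _
  d_separated φ ψ h1 h2 := by
    apply Subtype.ext
    funext x
    have hx1 : ψ.1 x - φ.1 x ≤ 0 := by
      rw [← h1]; exact le_iSup (fun y => ψ.1 y - φ.1 y) x
    have hx2 : φ.1 x - ψ.1 x ≤ 0 := by
      rw [← h2]; exact le_iSup (fun y => φ.1 y - ψ.1 y) x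
    exact le_antisymm (tsub_eq_zero_iff_le.mp (le_antisymm hx2 zero_le))
      (tsub_eq_zero_iff_le.mp (le_antisymm hx1 zero_le))

end QuasiMetric

/-! If `a` is a Yoneda limit of the centres of a directed set `S` of formal balls and `t₀` is
the infimum of the radii, then `(a, t₀)` bounds `S`, and `(a, g t₀)` is the supremum of `S` with its
radii moved by any `g` that acts on `[t₀, ∞)` as a translation; `g = (t + ·)` and `g = (· - t₀)`
give (i) and (ii).

Conversely, the supremum of `{(x, r - t₀)}` has radius `0`, and its centre `a` satisfies
`d(x, a) ≤ r - t₀` on `S`, whence `inf_i sup_{j ≥ i} d(x_j, y) ≤ d(a, y)`. For the other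
inequality, if eventually `d(x_j, y) ≤ t`, then `(y, t₀)` bounds `{(x, t + r)}`. The supremum of
that set is some `(z, t + t₀)`; since `(z, 0)` bounds `{(x, r - t₀)}` we get `d(a, z) = 0`, and
comparing with `(y, t₀)` gives `d(z, y) ≤ t`. -/

namespace QuasiMetric

variable {X : Type u} (q : QuasiMetric X)

theorem ballLE_refl (p : X × ℝ≥0) : q.ballLE p p := by
  simp [ballLE, q.d_self]

variable {q}

theorem ballLE.radius_le {p p' : X × ℝ≥0} (h : q.ballLE p p') : p'.2 ≤ p.2 := by
  exact_mod_cast le_self_add.trans h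

theorem ballLE_iff_dist_le {x y : X} {r s : ℝ≥0} (h : s ≤ r) :
    q.ballLE (x, r) (y, s) ↔ q.d x y ≤ ((r - s : ℝ≥0) : ℝ≥0∞) := by
  rw [ENNReal.coe_sub, ENNReal.le_sub_iff_add_le_left ENNReal.coe_ne_top (by exact_mod_cast h)]
  rfl

theorem ballLE_iff_of_radius_sub_eq {x y : X} {r s r' s' : ℝ≥0} (hs : s ≤ r) (hs' : s' ≤ r')
    (h : r - s = r' - s') : q.ballLE (x, r) (y, s) ↔ q.ballLE (x, r') (y, s') := by
  rw [ballLE_iff_dist_le hs, ballLE_iff_dist_le hs', h]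

noncomputable def infRadius (S : Set (X × ℝ≥0)) : ℝ≥0 := ⨅ p : S, (p : X × ℝ≥0).2

variable {S : Set (X × ℝ≥0)}

theorem infRadius_le {p : X × ℝ≥0} (hp : p ∈ S) : infRadius S ≤ p.2 :=
  ciInf_le (OrderBot.bddBelow _) (⟨p, hp⟩ : S)

theorem le_add_infRadius (hne : S.Nonempty) {s t : ℝ≥0} (h : ∀ p ∈ S, s ≤ t + p.2) :
    s ≤ t + infRadius S := by
  have : Nonempty S := hne.to_subtype
  exact tsub_le_iff_left.mp (le_ciInf fun p => tsub_le_iff_left.mpr (h p.1 p.2))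

theorem iInf_radius_sub_infRadius (hne : S.Nonempty) :
    ⨅ p : S, (((p : X × ℝ≥0).2 - infRadius S : ℝ≥0) : ℝ≥0∞) = 0 := by
  have : Nonempty S := hne.to_subtype
  refine le_antisymm (ENNReal.le_of_forall_pos_le_add fun ε hε _ => ?_) zero_le
  obtain ⟨p, hp⟩ := exists_lt_of_ciInf_lt (lt_add_of_pos_right (infRadius S) hε)
  refine iInf_le_of_le p ?_
  rw [zero_add, ENNReal.coe_le_coe, tsub_le_iff_left]
  exact hp.le

theorem ballLE_of_isYonedaLimit (hdir : DirectedOn q.ballLE S) {a : X}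
    (ha : q.IsYonedaLimit (fun p p' : S => q.ballLE p.1 p'.1) (fun p : S => p.1.1) a)
    {p : X × ℝ≥0} (hp : p ∈ S) : q.ballLE p (a, infRadius S) := by
  show (infRadius S : ℝ≥0∞) + q.d p.1 a ≤ p.2
  refine ENNReal.le_of_forall_pos_le_add fun ε hε _ => ?_
  have hlt : ⨅ i : S, ⨆ j : S, ⨆ _ : q.ballLE i.1 j.1, q.d (j : X × ℝ≥0).1 a < ε := by
    rw [← ha a, q.d_self]
    exact_mod_cast hε
  obtain ⟨i, hi⟩ := iInf_lt_iff.mp hlt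
  obtain ⟨k, hk, hpk, hik⟩ := hdir p hp i.1 i.2
  have hka : q.d k.1 a ≤ ε :=
    (le_iSup₂ (f := fun (j : S) (_ : q.ballLE i.1 j.1) => q.d (j : X × ℝ≥0).1 a)
      ⟨k, hk⟩ hik).trans hi.le
  calc (infRadius S : ℝ≥0∞) + q.d p.1 a ≤ k.2 + (q.d p.1 k.1 + q.d k.1 a) := by
        gcongr
        · exact infRadius_le hk
        · exact q.d_triangle _ _ _
    _ = (k.2 + q.d p.1 k.1) + q.d k.1 a := (add_assoc _ _ _).symm
    _ ≤ p.2 + ε := add_le_add hpk hka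


theorem add_dist_le_iInf_of_isYonedaLimit {a : X}
    (ha : q.IsYonedaLimit (fun p p' : S => q.ballLE p.1 p'.1) (fun p : S => p.1.1) a)
    (s : ℝ≥0) (y : X) (f : S → ℝ≥0∞)
    (h : ∀ i j : S, q.ballLE i.1 j.1 → s + q.d (j : X × ℝ≥0).1 y ≤ f i) :
    s + q.d a y ≤ ⨅ i, f i := by
  rw [ha y, ENNReal.add_iInf]
  refine iInf_mono fun i => ?_
  have hsi : (s : ℝ≥0∞) ≤ f i := le_self_add.trans (h i i (q.ballLE_refl _))
  rw [← ENNReal.le_sub_iff_add_le_left ENNReal.coe_ne_top hsi]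
  exact iSup₂_le fun j hij =>
    (ENNReal.le_sub_iff_add_le_left ENNReal.coe_ne_top hsi).mpr (h i j hij)

theorem isBallLUB_image_of_isYonedaLimit (hne : S.Nonempty) (hdir : DirectedOn q.ballLE S)
    {a : X} (ha : q.IsYonedaLimit (fun p p' : S => q.ballLE p.1 p'.1) (fun p : S => p.1.1) a)
    (g : ℝ≥0 → ℝ≥0) (hg : ∀ p ∈ S, g p.2 = g (infRadius S) + (p.2 - infRadius S)) :
    q.IsBallLUB ((fun p : X × ℝ≥0 => (p.1, g p.2)) '' S) (a, g (infRadius S)) := by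
  set t₀ := infRadius S
  refine ⟨Set.forall_mem_image.mpr fun p hp => ?_, fun c hc => ?_⟩
  · rw [hg p hp, ballLE_iff_of_radius_sub_eq le_self_add (infRadius_le hp)
      (add_tsub_cancel_left _ _)]
    exact ballLE_of_isYonedaLimit hdir ha hp
  · have hcS : ∀ p ∈ S, q.ballLE (p.1, g p.2) c := Set.forall_mem_image.mp hc
    show (c.2 : ℝ≥0∞) + q.d a c.1 ≤ g t₀
    calc (c.2 : ℝ≥0∞) + q.d a c.1
        ≤ ⨅ i : S, ((g t₀ : ℝ≥0∞) + (((i : X × ℝ≥0).2 - t₀ : ℝ≥0) : ℝ≥0∞)) := by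
          refine add_dist_le_iInf_of_isYonedaLimit ha _ _ _ fun i j hij => ?_
          calc (c.2 : ℝ≥0∞) + q.d (j : X × ℝ≥0).1 c.1 ≤ g (j : X × ℝ≥0).2 := hcS j j.2
            _ = (g t₀ : ℝ≥0∞) + (((j : X × ℝ≥0).2 - t₀ : ℝ≥0) : ℝ≥0∞) := by
              rw [hg j j.2, ENNReal.coe_add]
            _ ≤ (g t₀ : ℝ≥0∞) + (((i : X × ℝ≥0).2 - t₀ : ℝ≥0) : ℝ≥0∞) := by
              gcongr
              exact hij.radius_le
      _ = g t₀ := by rw [← ENNReal.add_iInf, iInf_radius_sub_infRadius hne, add_zero]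

theorem iInf_iSup_dist_le_of_ballLE (hne : S.Nonempty) {a : X}
    (hub : ∀ p ∈ S, q.ballLE p (a, infRadius S)) (y : X) :
    ⨅ i : S, ⨆ j : S, ⨆ _ : q.ballLE i.1 j.1, q.d (j : X × ℝ≥0).1 y ≤ q.d a y := by
  set t₀ := infRadius S
  calc ⨅ i : S, ⨆ j : S, ⨆ _ : q.ballLE i.1 j.1, q.d (j : X × ℝ≥0).1 y
      ≤ ⨅ i : S, ((((i : X × ℝ≥0).2 - t₀ : ℝ≥0) : ℝ≥0∞) + q.d a y) :=
        iInf_mono fun i => iSup₂_le fun j hij => ?_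
    _ = q.d a y := by rw [← ENNReal.iInf_add, iInf_radius_sub_infRadius hne, zero_add]
  calc q.d (j : X × ℝ≥0).1 y ≤ q.d (j : X × ℝ≥0).1 a + q.d a y := q.d_triangle _ _ _
    _ ≤ (((j : X × ℝ≥0).2 - t₀ : ℝ≥0) : ℝ≥0∞) + q.d a y := by
      gcongr
      exact (ballLE_iff_dist_le (infRadius_le j.2)).mp (hub j j.2)
    _ ≤ (((i : X × ℝ≥0).2 - t₀ : ℝ≥0) : ℝ≥0∞) + q.d a y := by
      gcongr
      exact hij.radius_le

theorem ballLE_enlarge_of_eventually_dist_le (hdir : DirectedOn q.ballLE S)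
    {i : X × ℝ≥0} (hi : i ∈ S) {y : X} {t : ℝ≥0} (hy : ∀ p ∈ S, q.ballLE i p → q.d p.1 y ≤ t)
    {p : X × ℝ≥0} (hp : p ∈ S) : q.ballLE (p.1, t + p.2) (y, infRadius S) := by
  obtain ⟨k, hk, hpk, hik⟩ := hdir p hp i hi
  show (infRadius S : ℝ≥0∞) + q.d p.1 y ≤ ((t + p.2 : ℝ≥0) : ℝ≥0∞)
  calc (infRadius S : ℝ≥0∞) + q.d p.1 y ≤ k.2 + (q.d p.1 k.1 + q.d k.1 y) := by
        gcongr
        · exact infRadius_le hk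
        · exact q.d_triangle _ _ _
    _ = (k.2 + q.d p.1 k.1) + q.d k.1 y := (add_assoc _ _ _).symm
    _ ≤ p.2 + t := add_le_add hpk (hy k hk hik)
    _ = ((t + p.2 : ℝ≥0) : ℝ≥0∞) := by rw [add_comm, ENNReal.coe_add]

theorem dist_le_of_isBallLUB_enlarge (hne : S.Nonempty) {a y : X} {t : ℝ≥0} {c : X × ℝ≥0}
    (hub : ∀ p ∈ S, q.ballLE p (a, infRadius S))
    (hleast : ∀ z, (∀ p ∈ S, q.ballLE p (z, infRadius S)) → q.d a z = 0)
    (hc : q.IsBallLUB ((fun p : X × ℝ≥0 => (p.1, t + p.2)) '' S) c)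
    (hy : ∀ p ∈ S, q.ballLE (p.1, t + p.2) (y, infRadius S)) : q.d a y ≤ t := by
  set t₀ := infRadius S
  have hcS : ∀ p ∈ S, q.ballLE (p.1, t + p.2) c := Set.forall_mem_image.mp hc.1
  have hshift : ∀ p ∈ S, ∀ z, q.ballLE (p.1, t + p.2) (z, t + t₀) ↔ q.ballLE p (z, t₀) :=
    fun p hp z => ballLE_iff_of_radius_sub_eq (add_le_add_right (infRadius_le hp) t)
      (infRadius_le hp) (add_tsub_add_eq_tsub_left _ _ _)
  have hrad : c.2 = t + t₀ := le_antisymm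
    (le_add_infRadius hne fun p hp => (hcS p hp).radius_le)
    (hc.2 (a, t + t₀) (Set.forall_mem_image.mpr fun p hp => (hshift p hp a).mpr (hub p hp))).radius_le
  obtain ⟨z, r⟩ := c
  obtain rfl : r = t + t₀ := hrad
  have haz : q.d a z = 0 := hleast z fun p hp => (hshift p hp z).mp (hcS p hp)
  have hzy : q.d z y ≤ t := by
    have := (ballLE_iff_dist_le le_add_self).mp (hc.2 (y, t₀) (Set.forall_mem_image.mpr hy))
    rwa [add_tsub_cancel_right] at this
  calc q.d a y ≤ q.d a z + q.d z y := q.d_triangle _ _ _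
    _ ≤ t := by rw [haz, zero_add]; exact hzy

theorem isYonedaLimit_of_isBallLUB_shrink (hne : S.Nonempty) (hdir : DirectedOn q.ballLE S)
    {c : X × ℝ≥0} (hc : q.IsBallLUB ((fun p : X × ℝ≥0 => (p.1, p.2 - infRadius S)) '' S) c)
    (henlarge : ∀ t : ℝ≥0, ∃ c, q.IsBallLUB ((fun p : X × ℝ≥0 => (p.1, t + p.2)) '' S) c) :
    q.IsYonedaLimit (fun p p' : S => q.ballLE p.1 p'.1) (fun p : S => p.1.1) c.1 := by
  set t₀ := infRadius S
  have hcS : ∀ p ∈ S, q.ballLE (p.1, p.2 - t₀) c := Set.forall_mem_image.mp hc.1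
  have hshift : ∀ p ∈ S, ∀ z, q.ballLE (p.1, p.2 - t₀) (z, 0) ↔ q.ballLE p (z, t₀) :=
    fun p hp z => ballLE_iff_of_radius_sub_eq zero_le (infRadius_le hp) (tsub_zero _)
  have hrad : c.2 = 0 := by
    have : (c.2 : ℝ≥0∞) ≤ ⨅ p : S, (((p : X × ℝ≥0).2 - t₀ : ℝ≥0) : ℝ≥0∞) :=
      le_iInf fun p => ENNReal.coe_le_coe.mpr (hcS p p.2).radius_le
    rw [iInf_radius_sub_infRadius hne] at this
    exact_mod_cast nonpos_iff_eq_zero.mp this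
  obtain ⟨a, r⟩ := c
  obtain rfl : r = 0 := hrad
  have hub : ∀ p ∈ S, q.ballLE p (a, t₀) := fun p hp => (hshift p hp a).mp (hcS p hp)
  have hleast : ∀ z, (∀ p ∈ S, q.ballLE p (z, t₀)) → q.d a z = 0 := fun z hz => by
    have := hc.2 (z, 0) (Set.forall_mem_image.mpr fun p hp => (hshift p hp z).mpr (hz p hp))
    simpa [ballLE] using this
  intro y
  refine le_antisymm (le_iInf fun i => le_of_forall_ge fun b hb => ?_)
    (iInf_iSup_dist_le_of_ballLE hne hub y)
  induction b using ENNReal.recTopCoe with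
  | top => exact le_top
  | coe t =>
    obtain ⟨c, hc⟩ := henlarge t
    refine dist_le_of_isBallLUB_enlarge hne hub hleast hc fun p hp =>
      ballLE_enlarge_of_eventually_dist_le hdir i.2 (fun k hk hik => ?_) hp
    exact (le_iSup₂ (f := fun (j : S) (_ : q.ballLE i.1 j.1) => q.d (j : X × ℝ≥0).1 y)
      ⟨k, hk⟩ hik).trans hb

end QuasiMetric

open QuasiMetric in
/-- `(X, d)` is standard iff for each directed set `S` of formal balls
having a least upper bound, (i) for each `t < ∞` the directed set `{(x, t + r) | (x,r) ∈ S}`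
has a least upper bound, and (ii) the directed set `{(x, r - t) | (x,r) ∈ S}` for
`t = inf` of the radii has a least upper bound. -/
theorem stmt2 {X : Type u} (q : QuasiMetric X) :
    q.Standard ↔
      ∀ S : Set (X × ℝ≥0), S.Nonempty → DirectedOn q.ballLE S →
        (∃ b, q.IsBallLUB S b) →
        ((∀ t : ℝ≥0, ∃ c, q.IsBallLUB ((fun p : X × ℝ≥0 => (p.1, t + p.2)) '' S) c) ∧
          (∃ c, q.IsBallLUB
            ((fun p : X × ℝ≥0 => (p.1, p.2 - ⨅ p' : ↥S, (p' : X × ℝ≥0).2)) '' S) c)) := by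
  refine ⟨fun hstd S hne hdir hlub => ?_, fun H S hne hdir hlub => ?_⟩
  · obtain ⟨a, ha⟩ := hstd S hne hdir hlub
    refine ⟨fun t => ⟨_, isBallLUB_image_of_isYonedaLimit hne hdir ha (t + ·) fun p hp => ?_⟩,
      ⟨_, isBallLUB_image_of_isYonedaLimit hne hdir ha (· - infRadius S) fun p hp => ?_⟩⟩
    · rw [add_assoc, add_tsub_cancel_of_le (infRadius_le hp)]
    · rw [tsub_self, zero_add]
  · obtain ⟨c, hc⟩ := (H S hne hdir hlub).2
    exact ⟨c.1, isYonedaLimit_of_isBallLUB_shrink hne hdir hc (H S hne hdir hlub).1⟩
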